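/- arXiv:2005.13175 — 4 statements merged into one kernel-verified Lean document; each statement's English description precedes it below -/
import Mathlib

section
/- Let Ω be a bounded domain in ℝ^N (N ≥ 2) and let u ∈ C⁰(cl Ω) ∩ C²(Ω) satisfy -Δu = N in Ω with u = 0 on ∂Ω. Then u(x) ≥ d_Γ(x)²/2 for every x ∈ cl Ω, where d_Γ(x) is the distance from x to ∂Ω. -/
/-!
At an interior minimum every second directional derivative is nonnegative, so a function with
`Δh < 0` on a bounded open set attains its minimum over the closure on the boundary; perturbing by
`-δ‖y‖²` extends this to `Δh ≤ 0`. This minimum principle first gives `u ≥ 0`. If `d = d_Γ(x) > 0`,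
the ball `B_d(x)` lies in `Ω`, and `u + ‖· - x‖²/2` is harmonic there and at least `d²/2` on the
sphere `∂B_d(x)`; evaluating at the centre gives `u(x) ≥ d²/2`.
-/

open Metric Set

noncomputable def laplacian {N : ℕ} (u : EuclideanSpace ℝ (Fin N) → ℝ)
    (x : EuclideanSpace ℝ (Fin N)) : ℝ :=
  ∑ i : Fin N, fderiv ℝ (fun y => fderiv ℝ u y (EuclideanSpace.single i 1)) x
    (EuclideanSpace.single i 1)

open Filter Topology Set.Notation
open scoped Laplacian

theorem IsLocalMin.deriv_deriv_nonneg {g : ℝ → ℝ} {t : ℝ} (hmin : IsLocalMin g t)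
    (hc : ContinuousAt g t) : 0 ≤ deriv (deriv g) t := by
  by_contra! hneg
  have hmax : IsLocalMax g t := isLocalMax_of_deriv_deriv_neg hneg hmin.deriv_eq_zero hc
  have hconst : g =ᶠ[𝓝 t] fun _ => g t := by
    filter_upwards [hmin, hmax] with s hs₁ hs₂ using le_antisymm hs₂ hs₁
  rw [hconst.deriv.deriv_eq] at hneg
  simp at hneg

theorem IsLocalMin.fderiv_fderiv_nonneg {E : Type*} [NormedAddCommGroup E] [NormedSpace ℝ E]
    {h : E → ℝ} {z : E} (hmin : IsLocalMin h z) (hh : ContDiffAt ℝ 2 h z) (v : E) :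
    0 ≤ fderiv ℝ (fderiv ℝ h) z v v := by
  set γ : ℝ → E := fun t => z + t • v
  have hγ : ∀ t, HasDerivAt γ v t := fun t =>
    HasDerivAt.const_add z (by simpa using (hasDerivAt_id t).smul_const v)
  have hγ0 : γ 0 = z := by simp [γ]
  have hγc : Tendsto γ (𝓝 0) (𝓝 z) := hγ0 ▸ (hγ 0).continuousAt.tendsto
  have hderiv : deriv (h ∘ γ) =ᶠ[𝓝 0] fun t => fderiv ℝ h (γ t) v := by
    filter_upwards [hγc.eventually (hh.eventually (by norm_num))] with t ht
    exact ((ht.differentiableAt (by norm_num)).hasFDerivAt.comp_hasDerivAt t (hγ t)).deriv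
  have hderiv2 : HasDerivAt (fun t => fderiv ℝ h (γ t) v) (fderiv ℝ (fderiv ℝ h) z v v) 0 := by
    have hd : DifferentiableAt ℝ (fderiv ℝ h) (γ 0) :=
      hγ0 ▸ (hh.fderiv_right (m := 1) (by norm_num)).differentiableAt (by norm_num)
    simpa [hγ0] using (hd.hasFDerivAt.comp_hasDerivAt 0 (hγ 0)).clm_apply (hasDerivAt_const 0 v)
  have hmin_line := (hγ0 ▸ hmin : IsLocalMin h (γ 0)).comp_continuous (hγ 0).continuousAt
  simpa [hderiv2.congr_of_eventuallyEq hderiv |>.deriv] using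
    hmin_line.deriv_deriv_nonneg (hh.continuousAt.comp_of_eq (hγ 0).continuousAt hγ0)

section MinimumPrinciple

variable {E : Type*} [NormedAddCommGroup E] [InnerProductSpace ℝ E] [FiniteDimensional ℝ E]

theorem IsLocalMin.laplacian_nonneg {h : E → ℝ} {z : E} (hmin : IsLocalMin h z)
    (hh : ContDiffAt ℝ 2 h z) : 0 ≤ Δ h z := by
  rw [InnerProductSpace.laplacian_eq_iteratedFDeriv_stdOrthonormalBasis]
  exact Finset.sum_nonneg fun i _ => by
    simpa [iteratedFDeriv_two_apply] using hmin.fderiv_fderiv_nonneg hh _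

theorem laplacian_norm_sub_sq (p x : E) :
    Δ (fun y => ‖y - p‖ ^ 2) x = 2 * Module.finrank ℝ E := by
  have hD : fderiv ℝ (fun y => ‖y - p‖ ^ 2) = fun y => ((2 : ℕ) • innerSL ℝ (E := E)) (y - p) := by
    funext y
    simpa using ((hasFDerivAt_id y).sub_const p).norm_sq.fderiv
  have hD2 : fderiv ℝ (fderiv ℝ (fun y => ‖y - p‖ ^ 2)) x = (2 : ℕ) • innerSL ℝ (E := E) := by
    rw [hD]
    exact ((((2 : ℕ) • innerSL ℝ (E := E)).hasFDerivAt.comp x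
      ((hasFDerivAt_id x).sub_const p)).congr_fderiv (ContinuousLinearMap.comp_id _)).fderiv
  have hdiag (v : E) : ((2 : ℕ) • innerSL ℝ (E := E)) v v = 2 * ‖v‖ ^ 2 := by simp
  rw [InnerProductSpace.laplacian_eq_iteratedFDeriv_stdOrthonormalBasis]
  simp only [iteratedFDeriv_two_apply, hD2, Matrix.cons_val_zero, Matrix.cons_val_one, hdiag,
    OrthonormalBasis.norm_eq_one]
  simp [mul_comm]

theorem le_of_laplacian_neg {V : Set E} (hVo : IsOpen V) (hVb : Bornology.IsBounded V)
    {h : E → ℝ} {m : ℝ} (hc : ContinuousOn h (closure V)) (hC2 : ContDiffOn ℝ 2 h V)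
    (hΔ : ∀ y ∈ V, Δ h y < 0) (hfr : ∀ y ∈ frontier V, m ≤ h y) :
    ∀ y ∈ closure V, m ≤ h y := by
  intro y hy
  obtain ⟨z, hz, hzmin⟩ := hVb.isCompact_closure.exists_isMinOn ⟨y, hy⟩ hc
  by_cases hzV : z ∈ V
  · have hloc : IsLocalMin h z :=
      hzmin.isLocalMin (mem_of_superset (hVo.mem_nhds hzV) subset_closure)
    exact absurd (hloc.laplacian_nonneg (hC2.contDiffAt (hVo.mem_nhds hzV))) (hΔ z hzV).not_ge
  · exact (hfr z (hVo.frontier_eq ▸ ⟨hz, hzV⟩)).trans (hzmin hy)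

theorem le_of_laplacian_nonpos [Nontrivial E] {V : Set E} (hVo : IsOpen V)
    (hVb : Bornology.IsBounded V) {h : E → ℝ} {m : ℝ} (hc : ContinuousOn h (closure V))
    (hC2 : ContDiffOn ℝ 2 h V) (hΔ : ∀ y ∈ V, Δ h y ≤ 0) (hfr : ∀ y ∈ frontier V, m ≤ h y) :
    ∀ y ∈ closure V, m ≤ h y := by
  obtain ⟨R, hR⟩ := hVb.closure.subset_closedBall 0
  intro y hy
  refine le_of_forall_pos_le_add fun ε hε => ?_
  set δ := ε / (R ^ 2 + 1)
  have hδ : 0 < δ := by positivity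
  have hq : ContDiff ℝ 2 fun y : E => ‖y‖ ^ 2 := contDiff_norm_sq ℝ
  have hδq : ContDiff ℝ 2 (δ • fun y : E => ‖y‖ ^ 2) := hq.const_smul δ
  have hperturbed := le_of_laplacian_neg (h := h - δ • fun y : E => ‖y‖ ^ 2)
    (m := m - δ * R ^ 2) hVo hVb (hc.sub hδq.continuous.continuousOn) (hC2.sub hδq.contDiffOn)
    (fun z hz => by
      have hΔq : Δ (fun y : E => ‖y‖ ^ 2) z = 2 * Module.finrank ℝ E := by
        simpa using laplacian_norm_sub_sq 0 z
      rw [(hC2.contDiffAt (hVo.mem_nhds hz)).laplacian_sub hδq.contDiffAt,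
        InnerProductSpace.laplacian_smul δ hq.contDiffAt, hΔq, smul_eq_mul]
      have : (0 : ℝ) < Module.finrank ℝ E := mod_cast Module.finrank_pos
      nlinarith [hΔ z hz])
    (fun z hz => by
      have hzR : ‖z‖ ≤ R := mem_closedBall_zero_iff.mp (hR (frontier_subset_closure hz))
      have := hfr z hz
      simp only [Pi.sub_apply, Pi.smul_apply, smul_eq_mul]
      nlinarith [pow_le_pow_left₀ (norm_nonneg z) hzR 2]) y hy
  simp only [Pi.sub_apply, Pi.smul_apply, smul_eq_mul] at hperturbed
  have hδR : δ * R ^ 2 ≤ ε := by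
    rw [div_mul_eq_mul_div, div_le_iff₀ (by positivity)]
    nlinarith
  nlinarith [norm_nonneg y]

theorem sq_div_two_le_of_laplacian_eq [Nontrivial E] {u : E → ℝ} {x : E} {r : ℝ} (hr : 0 < r)
    (hc : ContinuousOn u (closedBall x r)) (hC2 : ContDiffOn ℝ 2 u (ball x r))
    (hΔ : ∀ y ∈ ball x r, Δ u y = -Module.finrank ℝ E) (hbd : ∀ y ∈ sphere x r, 0 ≤ u y) :
    r ^ 2 / 2 ≤ u x := by
  have hq : ContDiff ℝ 2 fun y : E => ‖y - x‖ ^ 2 :=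
    (contDiff_norm_sq ℝ).comp (contDiff_id.sub contDiff_const)
  have hw : ContDiff ℝ 2 ((1 / 2 : ℝ) • fun y : E => ‖y - x‖ ^ 2) := hq.const_smul (1 / 2 : ℝ)
  set v := u + (1 / 2 : ℝ) • fun y : E => ‖y - x‖ ^ 2
  have hv := le_of_laplacian_nonpos (h := v) (m := r ^ 2 / 2) isOpen_ball isBounded_ball
    (by rw [closure_ball x hr.ne']; exact hc.add hw.continuous.continuousOn)
    (hC2.add hw.contDiffOn)
    (fun y hy => by
      rw [(hC2.contDiffAt (isOpen_ball.mem_nhds hy)).laplacian_add hw.contDiffAt,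
        InnerProductSpace.laplacian_smul _ hq.contDiffAt, laplacian_norm_sub_sq, hΔ y hy,
        smul_eq_mul]
      linarith)
    (fun y hy => by
      rw [frontier_ball x hr.ne'] at hy
      have := hbd y hy
      simp only [v, Pi.add_apply, Pi.smul_apply, smul_eq_mul, ← dist_eq_norm, mem_sphere.mp hy]
      linarith)
    x (subset_closure (mem_ball_self hr))
  simpa [v] using hv

end MinimumPrinciple

theorem ball_infDist_frontier_subset {E : Type*} [NormedAddCommGroup E] [NormedSpace ℝ E]
    {s : Set E} (hs : IsOpen s) {x : E} (hx : x ∈ s) : ball x (infDist x (frontier s)) ⊆ s := by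
  set r := infDist x (frontier s)
  intro y hy
  have hclopen : IsClopen (ball x r ↓∩ s) :=
    isClopen_preimage_val hs disjoint_ball_infDist.symm
  have : PreconnectedSpace (ball x r) :=
    Subtype.preconnectedSpace (convex_ball x r).isPreconnected
  have huniv := hclopen.eq_univ ⟨⟨x, mem_ball_self (pos_of_mem_ball hy)⟩, hx⟩
  exact eq_univ_iff_forall.mp huniv ⟨y, hy⟩

theorem laplacian_eq_innerProductSpace_laplacian {N : ℕ} {u : EuclideanSpace ℝ (Fin N) → ℝ}
    {x : EuclideanSpace ℝ (Fin N)} (hu : ContDiffAt ℝ 2 u x) : laplacian u x = Δ u x := by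
  have hd : DifferentiableAt ℝ (fderiv ℝ u) x :=
    (hu.fderiv_right (m := 1) (by norm_num)).differentiableAt (by norm_num)
  rw [InnerProductSpace.laplacian_eq_iteratedFDeriv_orthonormalBasis u
    (EuclideanSpace.basisFun (Fin N) ℝ)]
  refine Finset.sum_congr rfl fun i _ => ?_
  rw [iteratedFDeriv_two_apply,
    (hd.hasFDerivAt.clm_apply (hasFDerivAt_const (EuclideanSpace.single i 1) x)).fderiv]
  simp

theorem stmt_0_general {N : ℕ} (hN : 2 ≤ N) (Ω : Set (EuclideanSpace ℝ (Fin N)))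
    (hΩopen : IsOpen Ω) (hΩbdd : Bornology.IsBounded Ω)
    (u : EuclideanSpace ℝ (Fin N) → ℝ)
    (hu_cont : ContinuousOn u (closure Ω))
    (hu_C2 : ContDiffOn ℝ 2 u Ω)
    (hpde : ∀ x ∈ Ω, -laplacian u x = (N : ℝ))
    (hbdry : ∀ x ∈ frontier Ω, u x = 0) :
    ∀ x ∈ closure Ω, u x ≥ (infDist x (frontier Ω)) ^ 2 / 2 := by
  have : Nontrivial (EuclideanSpace ℝ (Fin N)) :=
    Module.nontrivial_of_finrank_pos (by rw [finrank_euclideanSpace_fin]; omega)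
  have hΔu : ∀ y ∈ Ω, Δ u y = -Module.finrank ℝ (EuclideanSpace ℝ (Fin N)) := fun y hy => by
    rw [← laplacian_eq_innerProductSpace_laplacian (hu_C2.contDiffAt (hΩopen.mem_nhds hy)),
      finrank_euclideanSpace_fin]
    linarith [hpde y hy]
  have hu_nonneg : ∀ y ∈ closure Ω, 0 ≤ u y :=
    le_of_laplacian_nonpos hΩopen hΩbdd hu_cont hu_C2
      (fun y hy => by rw [hΔu y hy]; simp) (fun y hy => (hbdry y hy).ge)
  intro x hx
  rcases (infDist_nonneg : 0 ≤ infDist x (frontier Ω)).eq_or_lt with hd | hd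
  · simpa [← hd] using hu_nonneg x hx
  have hxΩ : x ∈ Ω := by
    by_contra hxΩ
    exact hd.ne' (infDist_zero_of_mem (hΩopen.frontier_eq ▸ ⟨hx, hxΩ⟩))
  have hB := ball_infDist_frontier_subset hΩopen hxΩ
  have hB' : closedBall x (infDist x (frontier Ω)) ⊆ closure Ω :=
    closure_ball x hd.ne' ▸ closure_mono hB
  exact sq_div_two_le_of_laplacian_eq hd (hu_cont.mono hB') (hu_C2.mono hB)
    (fun y hy => hΔu y (hB hy)) (fun y hy => hu_nonneg y (hB' (sphere_subset_closedBall hy)))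

/-- If `u ∈ C⁰(cl Ω) ∩ C²(Ω)` satisfies `-Δu = N` in the bounded domain `Ω`
with `u = 0` on `∂Ω`, then `u(x) ≥ d_Γ(x)²/2` on `cl Ω`. -/
theorem stmt_0 {N : ℕ} (hN : 2 ≤ N) (Ω : Set (EuclideanSpace ℝ (Fin N)))
    (hΩopen : IsOpen Ω) (hΩconn : IsConnected Ω) (hΩbdd : Bornology.IsBounded Ω)
    (u : EuclideanSpace ℝ (Fin N) → ℝ)
    (hu_cont : ContinuousOn u (closure Ω))
    (hu_C2 : ContDiffOn ℝ 2 u Ω)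
    (hpde : ∀ x ∈ Ω, -laplacian u x = (N : ℝ))
    (hbdry : ∀ x ∈ frontier Ω, u x = 0) :
    ∀ x ∈ closure Ω, u x ≥ (infDist x (frontier Ω)) ^ 2 / 2 :=
  stmt_0_general hN Ω hΩopen hΩbdd u hu_cont hu_C2 hpde hbdry
end

section
/- Let Ω ⊂ ℝ^N be a bounded domain with mean convex C² boundary, and let u solve -Δu = N in Ω with u = 0 on ∂Ω, satisfying the gradient bound |∇u|² ≤ 2N(u(z) − u) on cl Ω where z is a global maximum point. Then √(u(z)) ≤ √(N/2)·d_Γ(z), and in particular u(z) ≤ (N/2)·r_Ω². -/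
open Metric Set
open scoped Classical

/-- The signed distance to the boundary of `Ω`: positive inside, negative outside. -/
noncomputable def signedBdryDist {N : ℕ} (Ω : Set (EuclideanSpace ℝ (Fin N)))
    (x : EuclideanSpace ℝ (Fin N)) : ℝ :=
  if x ∈ Ω then infDist x (frontier Ω) else -infDist x (frontier Ω)

/-- `Ω` has a mean convex `C²` boundary: the signed distance function is `C²` near the
boundary, and its Laplacian is nonpositive on the boundary.  (For a `C²` boundary,
`Δ d = -(N-1) M` on `Γ`, where `M` is the mean curvature with respect to the inward
normal, so this says `M ≥ 0`.) -/
def MeanConvexBoundary {N : ℕ} (Ω : Set (EuclideanSpace ℝ (Fin N))) : Prop :=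
  ∃ V : Set (EuclideanSpace ℝ (Fin N)), IsOpen V ∧ frontier Ω ⊆ V ∧
    ContDiffOn ℝ 2 (signedBdryDist Ω) V ∧
    ∀ y ∈ frontier Ω, laplacian (signedBdryDist Ω) y ≤ 0

/-! Along the segment from `z` to a nearest boundary point `y`, the gradient bound says that
`√(u z - u)` grows with slope at most `√(N/2) · |y - z|`. Since `u y = 0` and
`|y - z| = d_Γ(z)`, this gives `√(u z) ≤ √(N/2) · d_Γ(z)`, and `d_Γ(z) ≤ r_Ω`. -/

open AffineMap (lineMap)

theorem sqrt_le_sqrt_add_mul_of_abs_deriv_le {f f' : ℝ → ℝ} {a b K : ℝ} (hab : a ≤ b)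
    (hK : 0 ≤ K) (hf : ContinuousOn f (Icc a b)) (hf_nonneg : ∀ t ∈ Icc a b, 0 ≤ f t)
    (hf' : ∀ t ∈ Ico a b, HasDerivAt f (f' t) t)
    (hbound : ∀ t ∈ Ico a b, |f' t| ≤ 2 * K * √(f t)) :
    √(f b) ≤ √(f a) + K * (b - a) := by
  refine le_of_forall_pos_le_add fun ε hε => ?_
  -- `√f` need not be differentiable where `f = 0`, so we work with `√(f + ε²)` instead.
  have hreg : ∀ t ∈ Ico a b, 0 < √(f t + ε ^ 2) := fun t ht =>
    Real.sqrt_pos.2 (by have := hf_nonneg t (Ico_subset_Icc_self ht); positivity)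
  have hlip := norm_image_sub_le_of_norm_deriv_right_le_segment
    (f := fun t => √(f t + ε ^ 2)) (f' := fun t => f' t / (2 * √(f t + ε ^ 2))) (C := K)
    (hf.add continuousOn_const).sqrt
    (fun t ht => (((hf' t ht).add_const _).sqrt
      (Real.sqrt_pos.1 (hreg t ht)).ne').hasDerivWithinAt)
    (fun t ht => by
      have hsqrt : √(f t) ≤ √(f t + ε ^ 2) :=
        Real.sqrt_le_sqrt (le_add_of_nonneg_right (sq_nonneg ε))
      have hden : 0 < 2 * √(f t + ε ^ 2) := by linarith [hreg t ht]
      rw [Real.norm_eq_abs, abs_div, abs_of_pos hden, div_le_iff₀ hden]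
      nlinarith [hbound t ht])
    b (right_mem_Icc.2 hab)
  have hfa := hf_nonneg a (left_mem_Icc.2 hab)
  calc √(f b) ≤ √(f b + ε ^ 2) := Real.sqrt_le_sqrt (le_add_of_nonneg_right (sq_nonneg ε))
    _ ≤ √(f a + ε ^ 2) + K * (b - a) := by
      linarith [(le_abs_self _).trans (Real.norm_eq_abs _ ▸ hlip)]
    _ ≤ √(f a) + K * (b - a) + ε := by
      have : √(f a + ε ^ 2) ≤ √(f a) + ε := Real.sqrt_le_iff.2
        ⟨by positivity, by nlinarith [Real.sq_sqrt hfa, Real.sqrt_nonneg (f a)]⟩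
      linarith

theorem sqrt_sub_le_sqrt_sub_add_mul_dist {E : Type*} [NormedAddCommGroup E] [NormedSpace ℝ E]
    {u : E → ℝ} {U : Set E} {M K : ℝ} {x y : E} (hK : 0 ≤ K) (hU : IsOpen U)
    (hcont : ContinuousOn u (closure U)) (hdiff : DifferentiableOn ℝ u U)
    (hM : ∀ w ∈ closure U, u w ≤ M) (hfderiv : ∀ w ∈ U, ‖fderiv ℝ u w‖ ≤ 2 * K * √(M - u w))
    (hseg : ∀ t ∈ Ico (0 : ℝ) 1, lineMap x y t ∈ U) (hy : y ∈ closure U) :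
    √(M - u y) ≤ √(M - u x) + K * dist x y := by
  have hsegcl : ∀ t ∈ Icc (0 : ℝ) 1, lineMap x y t ∈ closure U := by
    intro t ht
    rcases ht.2.lt_or_eq with ht1 | rfl
    · exact subset_closure (hseg t ⟨ht.1, ht1⟩)
    · simpa using hy
  have key := sqrt_le_sqrt_add_mul_of_abs_deriv_le (f := fun t => M - u (lineMap x y t))
    (f' := fun t => -fderiv ℝ u (lineMap x y t) (y - x)) (K := K * dist x y) zero_le_one
    (by positivity)
    (continuousOn_const.sub (hcont.comp AffineMap.lineMap_continuous.continuousOn hsegcl))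
    (fun t ht => sub_nonneg.2 (hM _ (hsegcl t ht)))
    (fun t ht => ((hdiff.differentiableAt (hU.mem_nhds (hseg t ht))).hasFDerivAt.comp_hasDerivAt
      t AffineMap.hasDerivAt_lineMap).const_sub M)
    (fun t ht => calc
      |-fderiv ℝ u (lineMap x y t) (y - x)| ≤ ‖fderiv ℝ u (lineMap x y t)‖ * ‖y - x‖ := by
        rw [abs_neg, ← Real.norm_eq_abs]
        exact ContinuousLinearMap.le_opNorm _ _
      _ ≤ 2 * K * √(M - u (lineMap x y t)) * dist x y := by
        rw [dist_comm, dist_eq_norm]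
        gcongr
        exact hfderiv _ (hseg t ht)
      _ = 2 * (K * dist x y) * √(M - u (lineMap x y t)) := by ring)
  simpa using key

section Geometry

variable {E : Type*} [NormedAddCommGroup E] [NormedSpace ℝ E]

theorem Bornology.IsBounded.exists_mem_frontier_infDist_eq_dist [Nontrivial E] [ProperSpace E]
    {s : Set E} (hs : Bornology.IsBounded s) (hne : s.Nonempty) (x : E) :
    ∃ y ∈ frontier s, infDist x (frontier s) = dist x y := by
  have hfr : (frontier s).Nonempty :=
    nonempty_frontier_iff.2 ⟨hne, fun h => NormedSpace.unbounded_univ ℝ E (h ▸ hs)⟩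
  exact (isCompact_of_isClosed_isBounded isClosed_frontier
    (hs.closure.subset frontier_subset_closure)).exists_infDist_eq_dist hfr x

theorem ball_infDist_frontier_subset_s3 {Ω : Set E} (hΩ : IsOpen Ω) {z : E} (hz : z ∈ Ω) :
    ball z (infDist z (frontier Ω)) ⊆ Ω := by
  rcases (infDist_nonneg (x := z) (s := frontier Ω)).eq_or_lt with hd | hd
  · rw [← hd, ball_zero]
    exact empty_subset _
  refine (convex_ball z _).isPreconnected.subset_of_closure_inter_subset hΩ
    ⟨z, mem_ball_self hd, hz⟩ ?_
  rintro w ⟨hwcl, hwball⟩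
  rw [closure_eq_self_union_frontier] at hwcl
  exact hwcl.resolve_right fun hwfr => disjoint_ball_infDist.ne_of_mem hwball hwfr rfl

theorem lineMap_mem_of_dist_eq_infDist_frontier {Ω : Set E} (hΩ : IsOpen Ω) {z y : E}
    (hz : z ∈ Ω) (hy : dist z y = infDist z (frontier Ω)) {t : ℝ} (ht : t ∈ Ico (0 : ℝ) 1) :
    lineMap z y t ∈ Ω := by
  rcases eq_or_ne z y with rfl | hzy
  · simpa using hz
  apply ball_infDist_frontier_subset_s3 hΩ hz
  rw [mem_ball, dist_lineMap_left, Real.norm_of_nonneg ht.1, ← hy]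
  exact mul_lt_of_lt_one_left (dist_pos.2 hzy) ht.2

end Geometry

theorem bddAbove_infDist_image {α : Type*} [PseudoMetricSpace α] {s t : Set α}
    (hs : Bornology.IsBounded s) (ht : t.Nonempty) :
    BddAbove ((fun x => infDist x t) '' s) := by
  obtain ⟨y, hy⟩ := ht
  obtain ⟨r, hr⟩ := hs.subset_closedBall y
  exact ⟨r, by rintro _ ⟨x, hx, rfl⟩; exact (infDist_le_dist_of_mem hy).trans (hr hx)⟩

theorem stmt_3_general {N : ℕ} (hN : 2 ≤ N) (Ω : Set (EuclideanSpace ℝ (Fin N)))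
    (hΩopen : IsOpen Ω) (hΩbdd : Bornology.IsBounded Ω)
    (u : EuclideanSpace ℝ (Fin N) → ℝ)
    (hu_C1 : ContDiffOn ℝ 1 u (closure Ω))
    (hu_C2 : ContDiffOn ℝ 2 u Ω)
    (hbdry : ∀ x ∈ frontier Ω, u x = 0)
    (z : EuclideanSpace ℝ (Fin N)) (hz : z ∈ Ω)
    (hzmax : ∀ x ∈ closure Ω, u x ≤ u z)
    (hgrad : ∀ x ∈ closure Ω, ‖gradient u x‖ ^ 2 ≤ 2 * N * (u z - u x)) :
    Real.sqrt (u z) ≤ Real.sqrt ((N : ℝ) / 2) * infDist z (frontier Ω) ∧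
    u z ≤ ((N : ℝ) / 2) *
      (sSup ((fun x => infDist x (frontier Ω)) '' closure Ω)) ^ 2 := by
  have : Nonempty (Fin N) := ⟨⟨0, by omega⟩⟩
  obtain ⟨y, hyfr, hdy⟩ := hΩbdd.exists_mem_frontier_infDist_eq_dist ⟨z, hz⟩ z
  have hfderiv : ∀ w ∈ Ω, ‖fderiv ℝ u w‖ ≤ 2 * √((N : ℝ) / 2) * √(u z - u w) := fun w hw => calc
    ‖fderiv ℝ u w‖ = ‖gradient u w‖ := ((InnerProductSpace.toDual ℝ _).symm.norm_map _).symm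
    _ ≤ √(2 * N * (u z - u w)) := Real.le_sqrt_of_sq_le (hgrad w (subset_closure hw))
    _ = 2 * √((N : ℝ) / 2) * √(u z - u w) := by
      rw [show 2 * (N : ℝ) * (u z - u w) = 2 ^ 2 * (N / 2) * (u z - u w) by ring,
        Real.sqrt_mul' _ (sub_nonneg.2 (hzmax w (subset_closure hw))),
        Real.sqrt_mul' _ (by positivity), Real.sqrt_sq zero_le_two]
  have hsqrt := sqrt_sub_le_sqrt_sub_add_mul_dist (Real.sqrt_nonneg _) hΩopen
    hu_C1.continuousOn (hu_C2.differentiableOn two_ne_zero) hzmax hfderiv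
    (fun t ht => lineMap_mem_of_dist_eq_infDist_frontier hΩopen hz hdy.symm ht)
    (frontier_subset_closure hyfr)
  rw [hbdry y hyfr, sub_zero, sub_self, Real.sqrt_zero, zero_add, ← hdy] at hsqrt
  refine ⟨hsqrt, ?_⟩
  have huz : 0 ≤ u z := hbdry y hyfr ▸ hzmax y (frontier_subset_closure hyfr)
  calc u z = √(u z) ^ 2 := (Real.sq_sqrt huz).symm
    _ ≤ (√((N : ℝ) / 2) * infDist z (frontier Ω)) ^ 2 :=
      pow_le_pow_left₀ (Real.sqrt_nonneg _) hsqrt 2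
    _ = N / 2 * infDist z (frontier Ω) ^ 2 := by rw [mul_pow, Real.sq_sqrt (by positivity)]
    _ ≤ N / 2 * (sSup ((fun x => infDist x (frontier Ω)) '' closure Ω)) ^ 2 := by
      gcongr
      · exact infDist_nonneg
      · exact le_csSup (bddAbove_infDist_image hΩbdd.closure ⟨y, hyfr⟩)
          ⟨z, subset_closure hz, rfl⟩

/-- given the gradient bound `|∇u|² ≤ 2N(u(z) − u)` on `cl Ω`, one gets
`√(u(z)) ≤ √(N/2)·d_Γ(z)`, and in particular `u(z) ≤ (N/2)·r_Ω²`. -/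
theorem stmt_3 {N : ℕ} (hN : 2 ≤ N) (Ω : Set (EuclideanSpace ℝ (Fin N)))
    (hΩopen : IsOpen Ω) (hΩconn : IsConnected Ω) (hΩbdd : Bornology.IsBounded Ω)
    (hmc : MeanConvexBoundary Ω)
    (u : EuclideanSpace ℝ (Fin N) → ℝ)
    (hu_C1 : ContDiffOn ℝ 1 u (closure Ω))
    (hu_C2 : ContDiffOn ℝ 2 u Ω)
    (hpde : ∀ x ∈ Ω, -laplacian u x = (N : ℝ))
    (hbdry : ∀ x ∈ frontier Ω, u x = 0)
    (z : EuclideanSpace ℝ (Fin N)) (hz : z ∈ Ω)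
    (hzmax : ∀ x ∈ closure Ω, u x ≤ u z)
    (hgrad : ∀ x ∈ closure Ω, ‖gradient u x‖ ^ 2 ≤ 2 * N * (u z - u x)) :
    Real.sqrt (u z) ≤ Real.sqrt ((N : ℝ) / 2) * infDist z (frontier Ω) ∧
    u z ≤ ((N : ℝ) / 2) *
      (sSup ((fun x => infDist x (frontier Ω)) '' closure Ω)) ^ 2 :=
  stmt_3_general hN Ω hΩopen hΩbdd u hu_C1 hu_C2 hbdry z hz hzmax hgrad
end

section
/- Let Ω ⊂ ℝ^N be a bounded convex domain with John's ellipsoid E_a(c) (the ellipsoid of maximal volume contained in Ω, with semi-axes a_1 ≤ … ≤ a_N). Let u solve -Δu = N in Ω, u = 0 on ∂Ω, and suppose the gradient bound |∇u|² ≤ 2N(u(z) − u) holds, where z is the maximum point of u. Then d_Γ(z) ≥ m_{−2}(a)/√N, where m_{−2}(a) = ( (1/N) Σ_{i=1}^N a_i^{−2} )^{−1/2}. -/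
/-!
Comparing `u`, by the weak maximum principle, with the torsion function
`λ (1 - ∑ ((x i - c i) / a i)²)`, `λ = N / (2 ∑ a i⁻²)`, of the inscribed ellipsoid gives
`u z ≥ u c ≥ λ`. Along the segment from `z` to a boundary point `y`, the gradient bound makes
`√(u z - u)` Lipschitz with constant `√(N / 2)`, so `u z ≤ (N / 2) d(z, y)²`. Together,
`d(z, y)² ≥ (∑ a i⁻²)⁻¹`.
-/

open Metric Set MeasureTheory

/-- The open ellipsoid with center `c` and semi-axes `a i`. -/
def Ellipsoid {N : ℕ} (a : Fin N → ℝ) (c : EuclideanSpace ℝ (Fin N)) :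
    Set (EuclideanSpace ℝ (Fin N)) :=
  {y | ∑ i, ((y i - c i) / a i) ^ 2 < 1}

open Filter Topology

theorem IsLocalMax.deriv_deriv_nonpos {f : ℝ → ℝ} {x : ℝ} (hmax : IsLocalMax f x)
    (hf : ContinuousAt f x) : deriv (deriv f) x ≤ 0 := by
  by_contra! hpos
  have hmin := isLocalMin_of_deriv_deriv_pos hpos hmax.deriv_eq_zero hf
  have hconst : f =ᶠ[𝓝 x] fun _ => f x :=
    (hmin.and hmax).mono fun y hy => le_antisymm hy.2 hy.1
  have hderiv : deriv f =ᶠ[𝓝 x] fun _ => 0 := by simpa using hconst.deriv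
  simp [hderiv.deriv_eq] at hpos

section

variable {E : Type*} [NormedAddCommGroup E] [NormedSpace ℝ E]

theorem ContDiffAt.differentiableAt_fderiv_apply {h : E → ℝ} {x : E} (hh : ContDiffAt ℝ 2 h x)
    (v : E) : DifferentiableAt ℝ (fun y => fderiv ℝ h y v) x :=
  ((hh.fderiv_right (m := 1) (by norm_num)).differentiableAt (by simp)).clm_apply
    (differentiableAt_const v)

theorem IsLocalMax.fderiv_fderiv_apply_self_nonpos {h : E → ℝ} {m : E} (hmax : IsLocalMax h m)
    (hh : ContDiffAt ℝ 2 h m) (v : E) :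
    fderiv ℝ (fun y => fderiv ℝ h y v) m v ≤ 0 := by
  have hline : ∀ t : ℝ, HasDerivAt (fun t : ℝ => m + t • v) v t := fun t =>
    (((hasDerivAt_id t).smul_const v).const_add m).congr_deriv (one_smul ℝ v)
  have hcont : ContinuousAt (fun t : ℝ => m + t • v) 0 := (hline 0).continuousAt
  have hm : m + (0 : ℝ) • v = m := by simp
  have hmax' : IsLocalMax (fun t : ℝ => h (m + t • v)) 0 :=
    IsLocalMax.comp_continuous (g := fun t : ℝ => m + t • v) (by rwa [hm]) hcont
  have hderiv :
      deriv (fun t : ℝ => h (m + t • v)) =ᶠ[𝓝 0] fun t => fderiv ℝ h (m + t • v) v := by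
    have hdiff : ∀ᶠ y in 𝓝 (m + (0 : ℝ) • v), DifferentiableAt ℝ h y := by
      simpa using (hh.eventually (by simp)).mono fun y hy => hy.differentiableAt (by simp)
    filter_upwards [hcont.preimage_mem_nhds hdiff] with t ht
    exact (ht.hasFDerivAt.comp_hasDerivAt t (hline t)).deriv
  have hsecond : HasDerivAt (fun t : ℝ => fderiv ℝ h (m + t • v) v)
      (fderiv ℝ (fun y => fderiv ℝ h y v) m v) 0 :=
    (hh.differentiableAt_fderiv_apply v).hasFDerivAt.comp_hasDerivAt_of_eq 0 (hline 0) hm.symm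
  rw [← hsecond.deriv, ← hderiv.deriv_eq]
  exact hmax'.deriv_deriv_nonpos (hh.continuousAt.comp_of_eq hcont hm)

theorem Bornology.IsBounded.nonempty_frontier [Nontrivial E] {Ω : Set E}
    (hb : Bornology.IsBounded Ω) (hne : Ω.Nonempty) : (frontier Ω).Nonempty :=
  nonempty_frontier_iff.2 ⟨hne, fun h => NormedSpace.unbounded_univ ℝ E (h ▸ hb)⟩

end

theorem exists_mem_frontier_le_of_forall_not_isLocalMax {X : Type*} [MetricSpace X]
    [ProperSpace X] {U : Set X} (hU : IsOpen U) (hUb : Bornology.IsBounded U) {h : X → ℝ}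
    (hc : ContinuousOn h (closure U)) (hno : ∀ m ∈ U, ¬IsLocalMax h m) {x : X} (hx : x ∈ U) :
    ∃ y ∈ frontier U, h x ≤ h y := by
  obtain ⟨m, hm, hmax⟩ := hUb.isCompact_closure.exists_isMaxOn ⟨x, subset_closure hx⟩ hc
  have hmU : m ∉ U := fun hmU =>
    hno m hmU (hmax.localize.on_subset subset_closure |>.isLocalMax (hU.mem_nhds hmU))
  exact ⟨m, ⟨hm, by rwa [hU.interior_eq]⟩, hmax (subset_closure hx)⟩

section

variable {N : ℕ}

theorem IsLocalMax.laplacian_nonpos {h : EuclideanSpace ℝ (Fin N) → ℝ}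
    {m : EuclideanSpace ℝ (Fin N)} (hmax : IsLocalMax h m) (hh : ContDiffAt ℝ 2 h m) :
    laplacian h m ≤ 0 :=
  Finset.sum_nonpos fun _ _ => hmax.fderiv_fderiv_apply_self_nonpos hh _

theorem laplacian_sub {f g : EuclideanSpace ℝ (Fin N) → ℝ} {x : EuclideanSpace ℝ (Fin N)}
    (hf : ContDiffAt ℝ 2 f x) (hg : ContDiffAt ℝ 2 g x) :
    laplacian (fun y => f y - g y) x = laplacian f x - laplacian g x := by
  rw [laplacian, laplacian, laplacian, ← Finset.sum_sub_distrib]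
  refine Finset.sum_congr rfl fun j _ => ?_
  set e : EuclideanSpace ℝ (Fin N) := EuclideanSpace.single j 1
  have hev : (fun y => fderiv ℝ (fun y => f y - g y) y e) =ᶠ[𝓝 x]
      fun y => fderiv ℝ f y e - fderiv ℝ g y e := by
    filter_upwards [hf.eventually (by simp), hg.eventually (by simp)] with y hfy hgy
    rw [fderiv_fun_sub (hfy.differentiableAt (by simp)) (hgy.differentiableAt (by simp))]
    rfl
  rw [hev.fderiv_eq, fderiv_fun_sub (hf.differentiableAt_fderiv_apply _)
    (hg.differentiableAt_fderiv_apply _)]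
  rfl

def diagQuadratic (k : ℝ) (b : Fin N → ℝ) (c x : EuclideanSpace ℝ (Fin N)) : ℝ :=
  k + ∑ i, b i * (x i - c i) ^ 2

theorem contDiff_diagQuadratic (k : ℝ) (b : Fin N → ℝ) (c : EuclideanSpace ℝ (Fin N)) :
    ContDiff ℝ 2 (diagQuadratic k b c) := by
  unfold diagQuadratic
  fun_prop

theorem fderiv_diagQuadratic_single (k : ℝ) (b : Fin N → ℝ) (c x : EuclideanSpace ℝ (Fin N))
    (j : Fin N) :
    fderiv ℝ (diagQuadratic k b c) x (EuclideanSpace.single j 1) = 2 * b j * (x j - c j) := by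
  have hterm : ∀ i, HasFDerivAt (fun y : EuclideanSpace ℝ (Fin N) => b i * (y i - c i) ^ 2)
      ((2 * b i * (x i - c i)) • EuclideanSpace.proj (𝕜 := ℝ) i) x := fun i => by
    have hcoord := (EuclideanSpace.proj (𝕜 := ℝ) i).hasFDerivAt.sub_const (x := x) (c i)
    refine ((hcoord.pow 2).const_mul (b i)).congr_fderiv ?_
    ext w
    simp
    ring
  unfold diagQuadratic
  rw [((HasFDerivAt.fun_sum fun i _ => hterm i).const_add k).fderiv]
  simp

theorem laplacian_diagQuadratic (k : ℝ) (b : Fin N → ℝ) (c x : EuclideanSpace ℝ (Fin N)) :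
    laplacian (diagQuadratic k b c) x = 2 * ∑ i, b i := by
  rw [laplacian, Finset.mul_sum]
  refine Finset.sum_congr rfl fun j _ => ?_
  simp only [fderiv_diagQuadratic_single]
  have hlin : HasFDerivAt (fun y : EuclideanSpace ℝ (Fin N) => 2 * b j * (y j - c j))
      ((2 * b j) • EuclideanSpace.proj (𝕜 := ℝ) j) x :=
    ((EuclideanSpace.proj (𝕜 := ℝ) j).hasFDerivAt.sub_const (c j)).const_mul (2 * b j)
  rw [hlin.fderiv]
  simp

theorem isOpen_ellipsoid (a : Fin N → ℝ) (c : EuclideanSpace ℝ (Fin N)) :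
    IsOpen (Ellipsoid a c) :=
  isOpen_lt (by fun_prop) continuous_const

theorem isBounded_ellipsoid {a : Fin N → ℝ} (ha : ∀ i, 0 < a i)
    (c : EuclideanSpace ℝ (Fin N)) : Bornology.IsBounded (Ellipsoid a c) := by
  refine (Metric.isBounded_iff_subset_closedBall c).2 ⟨√(∑ i, a i ^ 2), fun y hy => ?_⟩
  rw [mem_closedBall, EuclideanSpace.dist_eq]
  refine Real.sqrt_le_sqrt (Finset.sum_le_sum fun i _ => ?_)
  have hi : ((y i - c i) / a i) ^ 2 ≤ 1 :=
    (Finset.single_le_sum (fun j _ => sq_nonneg ((y j - c j) / a j)) (Finset.mem_univ i)).trans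
      hy.le
  rw [div_pow, div_le_one (by have := ha i; positivity)] at hi
  rwa [Real.dist_eq, sq_abs]

-- The perturbation `h + ε ‖·‖²` has positive Laplacian, hence no interior maximum.
theorem nonpos_of_laplacian_nonneg (hN : 0 < N) {U : Set (EuclideanSpace ℝ (Fin N))}
    (hU : IsOpen U) (hUb : Bornology.IsBounded U) {h : EuclideanSpace ℝ (Fin N) → ℝ}
    (hc : ContinuousOn h (closure U)) (hh : ContDiffOn ℝ 2 h U)
    (hΔ : ∀ x ∈ U, 0 ≤ laplacian h x) (hfr : ∀ y ∈ frontier U, h y ≤ 0) :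
    ∀ x ∈ U, h x ≤ 0 := by
  intro x hx
  set sqNorm : EuclideanSpace ℝ (Fin N) → ℝ := fun y => ∑ i, y i ^ 2
  obtain ⟨R, hR⟩ := hUb.isCompact_closure.bddAbove_image (f := sqNorm) (by fun_prop)
  have hperturbed : ∀ ε > 0, h x ≤ ε * R := by
    intro ε hε
    set q := diagQuadratic 0 (fun _ => -ε) 0
    have hq : ∀ y, q y = -(ε * sqNorm y) := fun y => by
      simp [q, sqNorm, diagQuadratic, Finset.mul_sum]
    have hq2 : ContDiff ℝ 2 q := contDiff_diagQuadratic _ _ _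
    have hno : ∀ m ∈ U, ¬IsLocalMax (fun y => h y - q y) m := fun m hm hmax => by
      have hh2 := hh.contDiffAt (hU.mem_nhds hm)
      have hpos : 0 < laplacian (fun y => h y - q y) m := by
        rw [laplacian_sub hh2 hq2.contDiffAt, laplacian_diagQuadratic, Finset.sum_const,
          Finset.card_univ, Fintype.card_fin, nsmul_eq_mul]
        have : (0 : ℝ) < N * ε := by positivity
        linarith [hΔ m hm]
      exact (hmax.laplacian_nonpos (hh2.sub hq2.contDiffAt)).not_gt hpos
    obtain ⟨y, hy, hxy⟩ := exists_mem_frontier_le_of_forall_not_isLocalMax hU hUb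
      (hc.sub hq2.continuous.continuousOn) hno hx
    have hRy : sqNorm y ≤ R := hR (mem_image_of_mem _ (frontier_subset_closure hy))
    have hx0 : 0 ≤ sqNorm x := by positivity
    have hxy' : h x - q x ≤ h y - q y := hxy
    rw [hq, hq] at hxy'
    nlinarith [hfr y hy]
  have hlim : Tendsto (fun ε : ℝ => ε * R) (𝓝[>] 0) (𝓝 0) :=
    ((continuous_mul_const R).tendsto' 0 0 (zero_mul R)).mono_left nhdsWithin_le_nhds
  exact ge_of_tendsto hlim (eventually_nhdsWithin_of_forall hperturbed)

theorem diagQuadratic_le_of_frontier_le (hN : 0 < N) {U : Set (EuclideanSpace ℝ (Fin N))}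
    (hU : IsOpen U) (hUb : Bornology.IsBounded U) {u : EuclideanSpace ℝ (Fin N) → ℝ}
    (huc : ContinuousOn u (closure U)) (hu : ContDiffOn ℝ 2 u U) {f : ℝ}
    (hsuper : ∀ x ∈ U, f ≤ -laplacian u x) {k : ℝ} {b : Fin N → ℝ}
    {c : EuclideanSpace ℝ (Fin N)} (hsub : 0 ≤ f + 2 * ∑ i, b i)
    (hfr : ∀ y ∈ frontier U, diagQuadratic k b c y ≤ u y) :
    ∀ x ∈ U, diagQuadratic k b c x ≤ u x := by
  have hq := contDiff_diagQuadratic k b c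
  have hΔ : ∀ x ∈ U, 0 ≤ laplacian (fun y => diagQuadratic k b c y - u y) x := fun x hx => by
    rw [laplacian_sub hq.contDiffAt (hu.contDiffAt (hU.mem_nhds hx)), laplacian_diagQuadratic]
    linarith [hsuper x hx]
  have hdiff := nonpos_of_laplacian_nonneg hN hU hUb (hq.continuous.continuousOn.sub huc)
    (hq.contDiffOn.sub hu) hΔ (fun y hy => sub_nonpos.2 (hfr y hy))
  exact fun x hx => sub_nonpos.1 (hdiff x hx)

theorem nonneg_of_superharmonic (hN : 0 < N) {U : Set (EuclideanSpace ℝ (Fin N))}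
    (hU : IsOpen U) (hUb : Bornology.IsBounded U) {u : EuclideanSpace ℝ (Fin N) → ℝ}
    (huc : ContinuousOn u (closure U)) (hu : ContDiffOn ℝ 2 u U)
    (hsuper : ∀ x ∈ U, 0 ≤ -laplacian u x) (hfr : ∀ y ∈ frontier U, 0 ≤ u y) :
    ∀ x ∈ closure U, 0 ≤ u x := by
  have hzero : diagQuadratic 0 0 0 = (0 : EuclideanSpace ℝ (Fin N) → ℝ) := by
    ext; simp [diagQuadratic]
  have hcmp := diagQuadratic_le_of_frontier_le hN hU hUb huc hu hsuper (k := 0) (b := 0) (c := 0)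
    (by simp) (by simpa [hzero] using hfr)
  rw [closure_eq_self_union_frontier]
  rintro x (hx | hx)
  · simpa [hzero] using hcmp x hx
  · exact hfr x hx

theorem div_two_mul_sum_inv_sq_le_apply_center (hN : 0 < N) {a : Fin N → ℝ}
    (ha : ∀ i, 0 < a i) {c : EuclideanSpace ℝ (Fin N)} {u : EuclideanSpace ℝ (Fin N) → ℝ}
    (huc : ContinuousOn u (closure (Ellipsoid a c))) (hu : ContDiffOn ℝ 2 u (Ellipsoid a c))
    (hsuper : ∀ x ∈ Ellipsoid a c, (N : ℝ) ≤ -laplacian u x)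
    (hfr : ∀ y ∈ frontier (Ellipsoid a c), 0 ≤ u y) :
    (N : ℝ) / (2 * ∑ i, (a i ^ 2)⁻¹) ≤ u c := by
  have : Nonempty (Fin N) := ⟨⟨0, hN⟩⟩
  set S := ∑ i, (a i ^ 2)⁻¹
  have hS : 0 < S := Finset.sum_pos (fun i _ => by have := ha i; positivity) Finset.univ_nonempty
  set lam := (N : ℝ) / (2 * S)
  have hw : ∀ y, diagQuadratic lam (fun i => -lam * (a i ^ 2)⁻¹) c y
      = lam * (1 - ∑ i, ((y i - c i) / a i) ^ 2) := fun y => by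
    simp only [diagQuadratic, Finset.mul_sum, mul_sub, mul_one, div_eq_inv_mul]
    rw [sub_eq_add_neg, ← Finset.sum_neg_distrib]
    congr 1
    exact Finset.sum_congr rfl fun i _ => by ring
  have hcmp := diagQuadratic_le_of_frontier_le hN (isOpen_ellipsoid a c)
    (isBounded_ellipsoid ha c) huc hu hsuper (k := lam) (b := fun i => -lam * (a i ^ 2)⁻¹)
    (c := c) ?_ ?_ c (by simp [Ellipsoid])
  · rw [hw] at hcmp
    simpa using hcmp
  · have hlamS : lam * S = N / 2 := by
      simp only [lam]
      field_simp
    rw [← Finset.mul_sum]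
    linarith
  · intro y hy
    have hyE : y ∉ Ellipsoid a c := fun hyE =>
      (isOpen_ellipsoid a c).inter_frontier_eq.subset ⟨hyE, hy⟩
    rw [hw]
    have : 1 ≤ ∑ i, ((y i - c i) / a i) ^ 2 := not_lt.1 hyE
    nlinarith [hfr y hy, show 0 < lam by positivity]

theorem div_two_mul_sum_inv_sq_le_apply_center_of_subset (hN : 0 < N)
    {Ω : Set (EuclideanSpace ℝ (Fin N))} (hΩ : IsOpen Ω) (hΩb : Bornology.IsBounded Ω)
    {u : EuclideanSpace ℝ (Fin N) → ℝ} (huc : ContinuousOn u (closure Ω))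
    (hu : ContDiffOn ℝ 2 u Ω) (hpde : ∀ x ∈ Ω, -laplacian u x = N)
    (hbdry : ∀ x ∈ frontier Ω, u x = 0) {a : Fin N → ℝ} (ha : ∀ i, 0 < a i)
    {c : EuclideanSpace ℝ (Fin N)} (hE : Ellipsoid a c ⊆ Ω) :
    (N : ℝ) / (2 * ∑ i, (a i ^ 2)⁻¹) ≤ u c := by
  have hclE : closure (Ellipsoid a c) ⊆ closure Ω := closure_mono hE
  have hu_nonneg := nonneg_of_superharmonic hN hΩ hΩb huc hu
    (fun x hx => by rw [hpde x hx]; positivity) (fun y hy => (hbdry y hy).ge)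
  exact div_two_mul_sum_inv_sq_le_apply_center hN ha (huc.mono hclE) (hu.mono hE)
    (fun x hx => (hpde x (hE hx)).ge)
    (fun y hy => hu_nonneg y (hclE (frontier_subset_closure hy)))

-- Regularize by `ε` since `√` is not differentiable at `0`, then let `ε → 0`.
theorem sqrt_sub_sqrt_le_of_deriv_le_mul_sqrt {v v' : ℝ → ℝ} {s t K : ℝ} (hst : s ≤ t)
    (hK : 0 ≤ K) (hvc : ContinuousOn v (Icc s t)) (hv0 : ∀ r ∈ Ioo s t, 0 ≤ v r)
    (hv : ∀ r ∈ Ioo s t, HasDerivAt v (v' r) r) (hv' : ∀ r ∈ Ioo s t, v' r ≤ K * √(v r)) :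
    √(v t) - √(v s) ≤ K / 2 * (t - s) := by
  have hreg : ∀ ε > 0, √(v t + ε) - √(v s + ε) ≤ K / 2 * (t - s) := by
    intro ε hε
    have hderiv :
        ∀ r ∈ Ioo s t, HasDerivAt (fun r => √(v r + ε)) (v' r / (2 * √(v r + ε))) r :=
      fun r hr => ((hv r hr).add_const ε).sqrt (by linarith [hv0 r hr])
    refine (convex_Icc s t).image_sub_le_mul_sub_of_deriv_le (f := fun r => √(v r + ε))
      (hvc.add continuousOn_const).sqrt
      (fun r hr => ?_) (fun r hr => ?_) s (left_mem_Icc.2 hst) t (right_mem_Icc.2 hst) hst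
    · rw [interior_Icc] at hr
      exact (hderiv r hr).differentiableAt.differentiableWithinAt
    · rw [interior_Icc] at hr
      have hpos : 0 < √(v r + ε) := Real.sqrt_pos.2 (by linarith [hv0 r hr])
      have hle : √(v r) ≤ √(v r + ε) := Real.sqrt_le_sqrt (by linarith)
      rw [(hderiv r hr).deriv, div_le_iff₀ (by positivity)]
      nlinarith [hv' r hr]
  have hlim : Tendsto (fun ε => √(v t + ε) - √(v s + ε)) (𝓝[>] 0) (𝓝 (√(v t) - √(v s))) := by
    have hc : Continuous fun ε => √(v t + ε) - √(v s + ε) := by fun_prop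
    simpa using (hc.tendsto 0).mono_left nhdsWithin_le_nhds
  exact le_of_tendsto hlim (eventually_nhdsWithin_of_forall hreg)

theorem sub_le_of_norm_gradient_sq_le {Ω : Set (EuclideanSpace ℝ (Fin N))} (hΩ : IsOpen Ω)
    (hΩc : Convex ℝ Ω) {u : EuclideanSpace ℝ (Fin N) → ℝ} (huc : ContinuousOn u (closure Ω))
    (hu : DifferentiableOn ℝ u Ω) {z : EuclideanSpace ℝ (Fin N)} (hz : z ∈ Ω)
    (hzmax : ∀ x ∈ Ω, u x ≤ u z) {C : ℝ} (hC : 0 ≤ C)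
    (hgrad : ∀ x ∈ Ω, ‖gradient u x‖ ^ 2 ≤ 2 * C * (u z - u x))
    {y : EuclideanSpace ℝ (Fin N)} (hy : y ∈ closure Ω) :
    u z - u y ≤ C / 2 * dist z y ^ 2 := by
  set γ : ℝ → EuclideanSpace ℝ (Fin N) := fun t => z + t • (y - z)
  have hγ : ∀ t, HasDerivAt γ (y - z) t := fun t =>
    (((hasDerivAt_id t).smul_const (y - z)).const_add z).congr_deriv (one_smul ℝ _)
  have hγ_eq : ∀ t, γ t = (1 - t) • z + t • y := fun t => by simp only [γ]; module
  have hγΩ : ∀ t ∈ Ico (0 : ℝ) 1, γ t ∈ Ω := fun t ht => by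
    rw [hγ_eq, ← hΩ.interior_eq]
    exact hΩc.combo_interior_closure_mem_interior (by rwa [hΩ.interior_eq]) hy
      (by linarith [ht.2]) ht.1 (by ring)
  have hγcl : ∀ t ∈ Icc (0 : ℝ) 1, γ t ∈ closure Ω := fun t ht => by
    rw [hγ_eq]
    exact hΩc.closure (subset_closure hz) hy (by linarith [ht.2]) ht.1 (by ring)
  set v : ℝ → ℝ := fun t => u z - u (γ t)
  have hv : ∀ t ∈ Ioo (0 : ℝ) 1, HasDerivAt v (-fderiv ℝ u (γ t) (y - z)) t := fun t ht =>
    (((hu.differentiableAt (hΩ.mem_nhds (hγΩ t (Ioo_subset_Ico_self ht)))).hasFDerivAt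
      ).comp_hasDerivAt t (hγ t)).const_sub (u z)
  have hv' : ∀ t ∈ Ioo (0 : ℝ) 1,
      -fderiv ℝ u (γ t) (y - z) ≤ √(2 * C) * dist z y * √(v t) := by
    intro t ht
    have hγt := hγΩ t (Ioo_subset_Ico_self ht)
    have hnorm : ‖gradient u (γ t)‖ ≤ √(2 * C) * √(v t) := by
      rw [← Real.sqrt_mul (by positivity), ← Real.sqrt_sq (norm_nonneg _)]
      exact Real.sqrt_le_sqrt (hgrad _ hγt)
    calc -fderiv ℝ u (γ t) (y - z) = -inner ℝ (gradient u (γ t)) (y - z) := by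
          rw [gradient, InnerProductSpace.toDual_symm_apply]
      _ ≤ ‖gradient u (γ t)‖ * ‖y - z‖ := (neg_le_abs _).trans (abs_real_inner_le_norm _ _)
      _ ≤ √(2 * C) * √(v t) * ‖y - z‖ := by gcongr
      _ = √(2 * C) * dist z y * √(v t) := by rw [dist_eq_norm']; ring
  have hsqrt := sqrt_sub_sqrt_le_of_deriv_le_mul_sqrt (v := v) zero_le_one (by positivity)
    (continuousOn_const.sub (huc.comp (by fun_prop) hγcl))
    (fun t ht => sub_nonneg.2 (hzmax _ (hγΩ t (Ioo_subset_Ico_self ht)))) hv hv'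
  have hv0 : v 0 = 0 := by simp [v, γ]
  have hv1 : v 1 = u z - u y := by simp [v, γ]
  rw [hv0, hv1, Real.sqrt_zero, sub_zero, sub_zero, mul_one, Real.sqrt_le_left (by positivity)]
    at hsqrt
  calc u z - u y ≤ (√(2 * C) * dist z y / 2) ^ 2 := hsqrt
    _ = C / 2 * dist z y ^ 2 := by
      rw [div_pow, mul_pow, Real.sq_sqrt (by positivity)]
      ring

end

theorem stmt_5_general {N : ℕ} (hN : 2 ≤ N) (Ω : Set (EuclideanSpace ℝ (Fin N)))
    (hΩopen : IsOpen Ω) (hΩconv : Convex ℝ Ω)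
    (hΩbdd : Bornology.IsBounded Ω)
    (a : Fin N → ℝ) (ha : ∀ i, 0 < a i)
    (c : EuclideanSpace ℝ (Fin N))
    (hJohnSub : Ellipsoid a c ⊆ Ω)
    (u : EuclideanSpace ℝ (Fin N) → ℝ)
    (hu_cont : ContinuousOn u (closure Ω))
    (hu_C2 : ContDiffOn ℝ 2 u Ω)
    (hpde : ∀ x ∈ Ω, -laplacian u x = (N : ℝ))
    (hbdry : ∀ x ∈ frontier Ω, u x = 0)
    (z : EuclideanSpace ℝ (Fin N)) (hz : z ∈ Ω)
    (hzmax : ∀ x ∈ closure Ω, u x ≤ u z)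
    (hgrad : ∀ x ∈ closure Ω, ‖gradient u x‖ ^ 2 ≤ 2 * N * (u z - u x)) :
    infDist z (frontier Ω) ≥
      Real.sqrt (((N : ℝ)⁻¹ * ∑ i, (a i ^ 2)⁻¹)⁻¹) / Real.sqrt N := by
  have hN0 : 0 < N := by omega
  have : Nonempty (Fin N) := ⟨⟨0, hN0⟩⟩
  set S := ∑ i, (a i ^ 2)⁻¹
  have hcenter : (N : ℝ) / (2 * S) ≤ u c :=
    div_two_mul_sum_inv_sq_le_apply_center_of_subset hN0 hΩopen hΩbdd hu_cont hu_C2 hpde hbdry ha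
      hJohnSub
  have hcz : u c ≤ u z := hzmax c (subset_closure (hJohnSub (by simp [Ellipsoid])))
  rw [mul_inv, inv_inv, Real.sqrt_mul (by positivity), mul_div_cancel_left₀ _ (by positivity),
    ge_iff_le, le_infDist (hΩbdd.nonempty_frontier ⟨z, hz⟩)]
  intro y hy
  have hdist := sub_le_of_norm_gradient_sq_le hΩopen hΩconv hu_cont
    (hu_C2.differentiableOn (by norm_num)) hz (fun x hx => hzmax x (subset_closure hx))
    (Nat.cast_nonneg N) (fun x hx => hgrad x (subset_closure hx)) (frontier_subset_closure hy)
  rw [hbdry y hy, sub_zero] at hdist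
  have hchain : (N / 2 : ℝ) * S⁻¹ ≤ N / 2 * dist z y ^ 2 :=
    calc (N / 2 : ℝ) * S⁻¹ = N / (2 * S) := by ring
      _ ≤ u c := hcenter
      _ ≤ u z := hcz
      _ ≤ N / 2 * dist z y ^ 2 := hdist
  rw [Real.sqrt_le_left dist_nonneg]
  exact le_of_mul_le_mul_left hchain (by positivity)

/-- for a bounded convex domain with John's ellipsoid `E_a(c)`, the maximum
point `z` of the torsion function satisfies `d_Γ(z) ≥ m₋₂(a)/√N`, where `m₋₂(a)` is the
`(−2)`-power mean of the semi-axes. -/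
theorem stmt_5 {N : ℕ} (hN : 2 ≤ N) (Ω : Set (EuclideanSpace ℝ (Fin N)))
    (hΩopen : IsOpen Ω) (hΩconv : Convex ℝ Ω) (hΩne : Ω.Nonempty)
    (hΩbdd : Bornology.IsBounded Ω)
    (a : Fin N → ℝ) (ha : ∀ i, 0 < a i) (hasorted : Monotone a)
    (c : EuclideanSpace ℝ (Fin N))
    (hJohnSub : Ellipsoid a c ⊆ Ω)
    (hJohnMax : ∀ (a' : Fin N → ℝ) (c' : EuclideanSpace ℝ (Fin N)), (∀ i, 0 < a' i) →
      Ellipsoid a' c' ⊆ Ω → volume (Ellipsoid a' c') ≤ volume (Ellipsoid a c))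
    (u : EuclideanSpace ℝ (Fin N) → ℝ)
    (hu_cont : ContinuousOn u (closure Ω))
    (hu_C2 : ContDiffOn ℝ 2 u Ω)
    (hpde : ∀ x ∈ Ω, -laplacian u x = (N : ℝ))
    (hbdry : ∀ x ∈ frontier Ω, u x = 0)
    (z : EuclideanSpace ℝ (Fin N)) (hz : z ∈ Ω)
    (hzmax : ∀ x ∈ closure Ω, u x ≤ u z)
    (hgrad : ∀ x ∈ closure Ω, ‖gradient u x‖ ^ 2 ≤ 2 * N * (u z - u x)) :
    infDist z (frontier Ω) ≥
      Real.sqrt (((N : ℝ)⁻¹ * ∑ i, (a i ^ 2)⁻¹)⁻¹) / Real.sqrt N :=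
  stmt_5_general hN Ω hΩopen hΩconv hΩbdd a ha c hJohnSub u hu_cont hu_C2 hpde hbdry z hz hzmax
    hgrad
end

section
/- For every N ≥ 2, with λ₁(B) the first Dirichlet eigenvalue of the Laplacian on the unit ball B ⊂ ℝ^N and ω_k the volume of the unit ball in ℝ^k, it holds that (N/2)^{N−1} · ω_{N−1}/(ω_N · λ₁(B)^N) ≤ π/(2√(λ₁(B))). -/
open Metric MeasureTheory

/-- The first Dirichlet eigenvalue of `−Δ` on `Ω`, via the variational (Rayleigh
quotient) characterization over smooth functions compactly supported in `Ω`. -/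
noncomputable def dirichletEig1 {N : ℕ} (Ω : Set (EuclideanSpace ℝ (Fin N))) : ℝ :=
  sInf {R : ℝ | ∃ v : EuclideanSpace ℝ (Fin N) → ℝ, ContDiff ℝ 1 v ∧
    HasCompactSupport v ∧ tsupport v ⊆ Ω ∧ (∫ x, v x ^ 2) ≠ 0 ∧
    R = (∫ x, ‖gradient v x‖ ^ 2) / (∫ x, v x ^ 2)}

/-- `ω_k`, the volume of the unit ball in `ℝ^k`. -/
noncomputable def unitBallVol (k : ℕ) : ℝ :=
  (volume (ball (0 : EuclideanSpace ℝ (Fin k)) 1)).toReal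

/-
Integrating `div (v² x) = N v² + 2 v ⟪∇v, x⟫` against Lebesgue measure and using `‖x‖ ≤ 1` on the
support together with AM–GM gives the Hardy-type inequality `(N/2)² ∫ v² ≤ ∫ ‖∇v‖²`, hence
`λ₁(B) ≥ (N/2)²`. Log-convexity of `Γ` gives `Γ(s + 1/2) ≤ √s Γ(s)`, hence
`ω_{N-1} ≤ √((N+1)/(2π)) ω_N`. With both bounds the claim reduces to `3 (N/2)^N ≤ π (N/2)^(2N-1)`.
-/

open Module Real

section
variable {E : Type*} [NormedAddCommGroup E] [NormedSpace ℝ E] [FiniteDimensional ℝ E]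
  [MeasurableSpace E] [BorelSpace E] {μ : Measure E} [μ.IsAddHaarMeasure]

theorem integral_fderiv_apply_self {f : E → ℝ} (hf : ContDiff ℝ 1 f)
    (hcs : HasCompactSupport f) :
    ∫ x, fderiv ℝ f x x ∂μ = -(finrank ℝ E * ∫ x, f x ∂μ) := by
  let b := finBasis ℝ E
  let c : Fin (finrank ℝ E) → E →L[ℝ] ℝ := fun i ↦ (b.coord i).toContinuousLinearMap
  have hc : ∀ i x, fderiv ℝ (c i) x (b i) = 1 := fun i x ↦ by rw [(c i).fderiv]; simp [c]
  have hDf_int : ∀ i, Integrable (fun x ↦ c i x * fderiv ℝ f x (b i)) μ := fun i ↦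
    ((c i).continuous.mul ((hf.continuous_fderiv one_ne_zero).clm_apply continuous_const))
      |>.integrable_of_hasCompactSupport (hcs.fderiv_apply (𝕜 := ℝ) (b i)).mul_left
  have hexpand : ∀ x, fderiv ℝ f x x = ∑ i, c i x * fderiv ℝ f x (b i) := fun x ↦
    calc fderiv ℝ f x x = fderiv ℝ f x (∑ i, b.repr x i • b i) := by rw [b.sum_repr]
      _ = ∑ i, c i x * fderiv ℝ f x (b i) := by
        simp only [map_sum, map_smul, smul_eq_mul]; rfl
  have hparts : ∀ i, ∫ x, c i x * fderiv ℝ f x (b i) ∂μ = -∫ x, f x ∂μ := fun i ↦ by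
    rw [integral_mul_fderiv_eq_neg_fderiv_mul_of_integrable]
    · simp only [hc, one_mul]
    · simpa only [hc, one_mul] using hf.continuous.integrable_of_hasCompactSupport hcs
    · exact hDf_int i
    · exact ((c i).continuous.mul hf.continuous).integrable_of_hasCompactSupport hcs.mul_left
    · exact fun x _ ↦ (c i).differentiableAt
    · exact fun x _ ↦ hf.differentiable one_ne_zero x
  rw [integral_congr_ae (.of_forall hexpand), integral_finsetSum _ fun i _ ↦ hDf_int i]
  simp [hparts]
end

section
variable {E : Type*} [NormedAddCommGroup E] [InnerProductSpace ℝ E] [FiniteDimensional ℝ E]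
  [MeasurableSpace E] [BorelSpace E] {μ : Measure E} [μ.IsAddHaarMeasure]

theorem sq_half_finrank_mul_integral_sq_le_integral_norm_gradient_sq {v : E → ℝ}
    (hv : ContDiff ℝ 1 v) (hcs : HasCompactSupport v) (hsupp : tsupport v ⊆ closedBall 0 1) :
    ((finrank ℝ E : ℝ) / 2) ^ 2 * ∫ x, v x ^ 2 ∂μ ≤ ∫ x, ‖gradient v x‖ ^ 2 ∂μ := by
  set n : ℝ := (finrank ℝ E : ℝ)
  have hDv : Continuous (fderiv ℝ v) := hv.continuous_fderiv one_ne_zero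
  have hcs2 : HasCompactSupport (fun x ↦ v x ^ 2) :=
    hcs.comp_left (g := fun t : ℝ ↦ t ^ 2) (by simp)
  have hv2 : Integrable (fun x ↦ v x ^ 2) μ :=
    (hv.continuous.pow 2).integrable_of_hasCompactSupport hcs2
  have hcsD2 : HasCompactSupport (fun x ↦ ‖fderiv ℝ v x‖ ^ 2) :=
    (hcs.fderiv (𝕜 := ℝ)).comp_left (g := fun L : E →L[ℝ] ℝ ↦ ‖L‖ ^ 2) (by simp)
  have hDv2 : Integrable (fun x ↦ ‖fderiv ℝ v x‖ ^ 2) μ :=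
    (hDv.norm.pow 2).integrable_of_hasCompactSupport hcsD2
  have hvDv : Integrable (fun x ↦ v x * fderiv ℝ v x x) μ :=
    (hv.continuous.mul (hDv.clm_apply continuous_id)).integrable_of_hasCompactSupport
      hcs.mul_right
  have hradial : ∫ x, v x * fderiv ℝ v x x ∂μ = -(n / 2 * ∫ x, v x ^ 2 ∂μ) := by
    have hD : ∀ x, fderiv ℝ (fun y ↦ v y ^ 2) x x = 2 * (v x * fderiv ℝ v x x) := fun x ↦ by
      rw [((hv.differentiable one_ne_zero x).hasFDerivAt.pow 2).fderiv]
      simp only [smul_apply, nsmul_eq_mul, smul_eq_mul]; ring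
    have := integral_fderiv_apply_self (μ := μ) (hv.pow 2) hcs2
    simp only [hD, integral_const_mul] at this
    linarith
  have hle : ∀ x, |fderiv ℝ v x x| ≤ ‖fderiv ℝ v x‖ := fun x ↦ by
    by_cases hx : x ∈ tsupport v
    · simpa using (fderiv ℝ v x).le_of_opNorm_le_of_le le_rfl
        (mem_closedBall_zero_iff.1 (hsupp hx))
    · simp [fderiv_of_notMem_tsupport ℝ hx]
  have hpt : ∀ x,
      -(n * (v x * fderiv ℝ v x x)) ≤ (n / 2) ^ 2 * v x ^ 2 + ‖fderiv ℝ v x‖ ^ 2 := fun x ↦ by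
    have hvD : -(v x * fderiv ℝ v x x) ≤ |v x| * ‖fderiv ℝ v x‖ :=
      (neg_le_abs _).trans <| (abs_mul _ _).trans_le (by gcongr; exact hle x)
    have hn : 0 ≤ n := Nat.cast_nonneg _
    nlinarith [mul_le_mul_of_nonneg_left hvD hn, sq_nonneg (n / 2 * |v x| - ‖fderiv ℝ v x‖),
      sq_abs (v x)]
  have hint : ∫ x, -(n * (v x * fderiv ℝ v x x)) ∂μ
      ≤ ∫ x, ((n / 2) ^ 2 * v x ^ 2 + ‖fderiv ℝ v x‖ ^ 2) ∂μ :=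
    integral_mono (hvDv.const_mul n).neg ((hv2.const_mul _).add hDv2) hpt
  rw [integral_neg, integral_const_mul, hradial, integral_add (hv2.const_mul _) hDv2,
    integral_const_mul] at hint
  have hgrad : ∀ x, ‖gradient v x‖ = ‖fderiv ℝ v x‖ := fun x ↦ by simp [gradient]
  simp only [hgrad]
  linarith
end

theorem exists_contDiff_tsupport_subset_integral_sq_pos {E : Type*} [NormedAddCommGroup E]
    [NormedSpace ℝ E] [FiniteDimensional ℝ E] [MeasurableSpace E] [BorelSpace E]
    {μ : Measure E} [μ.IsOpenPosMeasure] [IsFiniteMeasureOnCompacts μ] {s : Set E} {x : E}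
    (hs : s ∈ nhds x) :
    ∃ f : E → ℝ, ContDiff ℝ 1 f ∧ HasCompactSupport f ∧ tsupport f ⊆ s ∧
      0 < ∫ y, f y ^ 2 ∂μ := by
  obtain ⟨f, hsub, hcs, hf, -, hfx⟩ := exists_contDiff_tsupport_subset (n := 1) hs
  refine ⟨f, hf, hcs, hsub, ?_⟩
  exact (hf.continuous.pow 2).integral_pos_of_hasCompactSupport_nonneg_nonzero
    (hcs.comp_left (g := fun t : ℝ ↦ t ^ 2) (by simp)) (fun y ↦ sq_nonneg (f y)) (x := x)
    (by simp [hfx])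

theorem sq_half_le_dirichletEig1_ball (N : ℕ) :
    ((N : ℝ) / 2) ^ 2 ≤ dirichletEig1 (ball (0 : EuclideanSpace ℝ (Fin N)) 1) := by
  -- A test function makes the Rayleigh quotients nonempty, ruling out the junk `sInf ∅ = 0`.
  obtain ⟨f, hf, hcs, hsub, hpos⟩ := exists_contDiff_tsupport_subset_integral_sq_pos (μ := volume)
    (ball_mem_nhds (0 : EuclideanSpace ℝ (Fin N)) one_pos)
  refine le_csInf ⟨_, f, hf, hcs, hsub, hpos.ne', rfl⟩ ?_
  rintro _ ⟨v, hv, hcs, hsub, hne, rfl⟩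
  rw [le_div_iff₀ ((integral_nonneg fun x ↦ sq_nonneg _).lt_of_ne' hne)]
  simpa using sq_half_finrank_mul_integral_sq_le_integral_norm_gradient_sq (μ := volume) hv hcs
    (hsub.trans ball_subset_closedBall)

theorem Real.Gamma_add_half_le_sqrt_mul_Gamma {s : ℝ} (hs : 0 < s) :
    Gamma (s + 1 / 2) ≤ √s * Gamma s := by
  have hΓ := (Gamma_pos_of_pos hs).le
  have h := Gamma_mul_add_mul_le_rpow_Gamma_mul_rpow_Gamma hs (by linarith : 0 < s + 1)
    one_half_pos one_half_pos (add_halves 1)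
  rw [← sqrt_eq_rpow, ← sqrt_eq_rpow, Gamma_add_one hs.ne', sqrt_mul hs.le] at h
  calc Gamma (s + 1 / 2) = Gamma (1 / 2 * s + 1 / 2 * (s + 1)) := by ring_nf
    _ ≤ √(Gamma s) * (√s * √(Gamma s)) := h
    _ = √s * Gamma s := by rw [mul_left_comm, mul_self_sqrt hΓ]

theorem unitBallVol_eq (k : ℕ) : unitBallVol k = √π ^ k / Gamma (k / 2 + 1) := by
  rcases k.eq_zero_or_pos with rfl | hk
  · rw [unitBallVol, ← (PiLp.volume_preserving_toLp (Fin 0)).measure_preimage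
      measurableSet_ball.nullMeasurableSet, volume_pi, Measure.pi_of_empty,
      Measure.dirac_apply_of_mem (by simp [Subsingleton.elim _ (0 : EuclideanSpace ℝ (Fin 0))])]
    simp
  have : Nonempty (Fin k) := ⟨⟨0, hk⟩⟩
  rw [unitBallVol, EuclideanSpace.volume_ball]
  simp only [Fintype.card_fin, ENNReal.ofReal_one, one_pow, one_mul]
  exact ENNReal.toReal_ofReal (by positivity)

theorem unitBallVol_le_sqrt_mul_unitBallVol_succ (k : ℕ) :
    unitBallVol k ≤ √((k + 2) / (2 * π)) * unitBallVol (k + 1) := by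
  set s : ℝ := k / 2 + 1
  have hs : 0 < s := by positivity
  have hsucc : ((k + 1 : ℕ) : ℝ) / 2 + 1 = s + 1 / 2 := by push_cast; ring
  have hsqrt : √((k + 2) / (2 * π)) * √π = √s := by
    rw [← sqrt_mul (by positivity)]
    congr 1
    field_simp
    ring
  rw [unitBallVol_eq, unitBallVol_eq, hsucc, div_le_iff₀ (Gamma_pos_of_pos hs), ← mul_div_assoc,
    div_mul_eq_mul_div, le_div_iff₀ (Gamma_pos_of_pos (by positivity))]
  calc √π ^ k * Gamma (s + 1 / 2) ≤ √π ^ k * (√s * Gamma s) :=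
        mul_le_mul_of_nonneg_left (Gamma_add_half_le_sqrt_mul_Gamma hs) (by positivity)
    _ = √((k + 2) / (2 * π)) * √π ^ (k + 1) * Gamma s := by
        rw [← hsqrt, pow_succ]; ring

theorem two_mul_pow_mul_sqrt_le_pi_mul_pow {K : ℕ} (hK : 1 ≤ K) {s : ℝ}
    (hs : ((K : ℝ) + 1) / 2 ≤ s) :
    2 * (((K : ℝ) + 1) / 2) ^ K * √((K + 2) / (2 * π)) ≤ π * s ^ (2 * K + 1) := by
  have hK' : (1 : ℝ) ≤ K := by exact_mod_cast hK
  have hy : 1 ≤ ((K : ℝ) + 1) / 2 := by linarith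
  set y : ℝ := ((K : ℝ) + 1) / 2
  have hsqrt : √((K + 2) / (2 * π)) ≤ 3 / 2 * y := by
    refine sqrt_le_iff.mpr ⟨by positivity, ?_⟩
    rw [div_le_iff₀ (by positivity)]
    simp only [y]
    nlinarith [pi_gt_three]
  calc 2 * y ^ K * √((K + 2) / (2 * π)) ≤ 2 * y ^ K * (3 / 2 * y) := by gcongr
    _ = 3 * y ^ (K + 1) := by ring
    _ ≤ π * y ^ (2 * K + 1) :=
        mul_le_mul pi_gt_three.le (pow_le_pow_right₀ hy (by omega)) (by positivity) pi_pos.le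
    _ ≤ π * s ^ (2 * K + 1) := by gcongr

/-- for every `N ≥ 2`, with `λ₁(B)` the first Dirichlet eigenvalue of the
unit ball `B ⊂ ℝ^N` and `ω_k` the volume of the unit ball in `ℝ^k`,
`(N/2)^{N−1}·ω_{N−1}/(ω_N·λ₁(B)^N) ≤ π/(2√λ₁(B))`. -/
theorem stmt_10 (N : ℕ) (hN : 2 ≤ N) :
    ((N : ℝ) / 2) ^ (N - 1) * unitBallVol (N - 1) /
        (unitBallVol N * (dirichletEig1 (ball (0 : EuclideanSpace ℝ (Fin N)) 1)) ^ N)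
      ≤ Real.pi / (2 * Real.sqrt (dirichletEig1 (ball (0 : EuclideanSpace ℝ (Fin N)) 1))) := by
  obtain ⟨K, rfl⟩ : ∃ K, N = K + 1 := ⟨N - 1, by omega⟩
  have hlow := sq_half_le_dirichletEig1_ball (K + 1)
  rw [Nat.add_sub_cancel]
  push_cast at hlow ⊢
  set L := dirichletEig1 (ball (0 : EuclideanSpace ℝ (Fin (K + 1))) 1)
  have hL : L = √L ^ 2 := (sq_sqrt ((sq_nonneg _).trans hlow)).symm
  set s := √L
  have hs : ((K : ℝ) + 1) / 2 ≤ s := le_sqrt_of_sq_le hlow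
  have hs_pos : 0 < s := lt_of_lt_of_le (by positivity) hs
  have hω : 0 < unitBallVol (K + 1) := by rw [unitBallVol_eq]; positivity
  rw [hL, div_le_div_iff₀ (by positivity) (by positivity)]
  calc ((K + 1) / 2) ^ K * unitBallVol K * (2 * s)
      ≤ ((K + 1) / 2) ^ K * (√((K + 2) / (2 * π)) * unitBallVol (K + 1)) * (2 * s) := by
        gcongr; exact unitBallVol_le_sqrt_mul_unitBallVol_succ K
    _ = unitBallVol (K + 1) * s * (2 * ((K + 1) / 2) ^ K * √((K + 2) / (2 * π))) := by ring
    _ ≤ unitBallVol (K + 1) * s * (π * s ^ (2 * K + 1)) :=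
        mul_le_mul_of_nonneg_left (two_mul_pow_mul_sqrt_le_pi_mul_pow (by omega) hs)
          (by positivity)
    _ = π * (unitBallVol (K + 1) * (s ^ 2) ^ (K + 1)) := by ring
end
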